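/- arXiv:2402.00189 — 2 statements merged into one kernel-verified Lean document; each statement's English description precedes it below -/
import Mathlib

section
/- Let t ≥ 1 be an integer and let G be a connected regular finite simple graph on n vertices with adjacency matrix A and adjacency eigenvalues λ_1 ≥ λ_2 ≥ ... ≥ λ_n. Let p be a real polynomial of degree at most t, with W(p) = max_{u ∈ V(G)} (p(A))_{uu} and λ(p) = min_{2 ≤ i ≤ n} p(λ_i), and assume p(λ_1) > λ(p). Then eq_{t+1}(G) ≤ n · (W(p) − λ(p)) / (p(λ_1) − λ(p)). -/
open SimpleGraph

/-- `S` is a `t`-equidistant set of `G`: all distinct vertices of `S` are at distance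
exactly `t` in `G`. -/
def IsEquidistantSet {V : Type*} (G : SimpleGraph V) (t : ℕ) (S : Finset V) : Prop :=
  (S : Set V).Pairwise fun u v => G.dist u v = t

/-- The `t`-equidistant number of `G`: the maximum size of a `t`-equidistant set. -/
noncomputable def eqNum {V : Type*} [Fintype V] (G : SimpleGraph V) (t : ℕ) : ℕ :=
  sSup {n : ℕ | ∃ S : Finset V, IsEquidistantSet G t S ∧ S.card = n}

/-- `S` is a `t`-independent set of `G`: all distinct vertices of `S` are at pairwise
distance greater than `t` in `G`. -/
def IsTIndepSet {V : Type*} (G : SimpleGraph V) (t : ℕ) (S : Finset V) : Prop :=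
  (S : Set V).Pairwise fun u v => t < G.dist u v

/-- The `t`-independence number of `G`. -/
noncomputable def indepNumT {V : Type*} [Fintype V] (G : SimpleGraph V) (t : ℕ) : ℕ :=
  sSup {n : ℕ | ∃ S : Finset V, IsTIndepSet G t S ∧ S.card = n}

/-- The equidistant number of `G`: `max {eq_t(G) : 1 ≤ t ≤ diam G}`. -/
noncomputable def eqTotalNum {V : Type*} [Fintype V] (G : SimpleGraph V) : ℕ :=
  (Finset.Icc 1 G.diam).sup (eqNum G)

/-!
Hoffman's ratio argument. Let `S` be a `(t+1)`-equidistant set with indicator vector `x`, and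
`q = p - λ(p)`. Since `deg q ≤ t`, the entries of `q(A)` vanish between distinct vertices of `S`,
so `xᵀ q(A) x ≤ |S| (W(p) - λ(p))`. On the other hand `q(A)` is positive semidefinite and, `G`
being `k`-regular, the constant vector is an eigenvector of `A` for its largest eigenvalue
`λ₁ = k`; projecting `x` onto it gives `xᵀ q(A) x ≥ |S|² (p(λ₁) - λ(p)) / n`.
-/

open Polynomial Matrix Finset
open scoped MatrixOrder ComplexOrder

namespace Matrix

variable {n : Type*} [Fintype n]

theorem indicator_one_dotProduct_mulVec_indicator_one {R : Type*} [NonAssocSemiring R]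
    (M : Matrix n n R) (S : Finset n) :
    (S : Set n).indicator 1 ⬝ᵥ M *ᵥ (S : Set n).indicator 1 = ∑ i ∈ S, ∑ j ∈ S, M i j := by
  classical
  simp [dotProduct, mulVec, Set.indicator_apply, Finset.sum_ite_mem]

theorem PosSemidef.sq_sum_mul_le_card_mul [Nonempty n] {M : Matrix n n ℝ} (hM : M.PosSemidef)
    {a : ℝ} (hM1 : M *ᵥ 1 = a • 1) (x : n → ℝ) :
    (∑ i, x i) ^ 2 * a ≤ Fintype.card n * (x ⬝ᵥ M *ᵥ x) := by
  set σ := ∑ i, x i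
  set N : ℝ := (Fintype.card n : ℝ)
  have hMT : Mᵀ = M := by simpa [conjTranspose_eq_transpose_of_trivial] using hM.1.eq
  have h1x : 1 ⬝ᵥ M *ᵥ x = a * σ := by
    rw [dotProduct_mulVec, ← mulVec_transpose, hMT, hM1, smul_dotProduct, one_dotProduct,
      smul_eq_mul]
  have hx1 : x ⬝ᵥ M *ᵥ 1 = a * σ := by
    rw [hM1, dotProduct_smul, dotProduct_one, smul_eq_mul]
  have h11 : (1 : n → ℝ) ⬝ᵥ M *ᵥ 1 = a * N := by
    rw [hM1, dotProduct_smul, dotProduct_one, smul_eq_mul]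
    simp [N]
  -- `N • x - σ • 1` is orthogonal to the constant vector, an eigenvector of `M`.
  have hy := hM.dotProduct_mulVec_nonneg (N • x - σ • 1)
  simp only [star_trivial, mulVec_sub, mulVec_smul, dotProduct_sub, sub_dotProduct,
    dotProduct_smul, smul_dotProduct, h1x, hx1, h11, smul_eq_mul] at hy
  have hN : 0 < N := by simp [N, Fintype.card_pos]
  nlinarith

variable [DecidableEq n]

theorem aeval_mulVec_of_mulVec_eq_smul {R : Type*} [CommRing R] {A : Matrix n n R} {v : n → R}
    {μ : R} (h : A *ᵥ v = μ • v) (p : R[X]) : aeval A p *ᵥ v = p.eval μ • v := by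
  have := Module.End.aeval_apply_of_mem_apply_eq_smul (f := toLin' A) (p := p)
    (by rwa [toLin'_apply])
  rwa [show toLin' A = toLinAlgEquiv' A from rfl, aeval_algEquiv, AlgHom.comp_apply,
    AlgEquiv.coe_toAlgHom, toLinAlgEquiv'_apply] at this

theorem IsHermitian.posSemidef_aeval {𝕜 : Type*} [RCLike 𝕜] {A : Matrix n n 𝕜}
    (hA : A.IsHermitian) {p : ℝ[X]} (hp : ∀ μ ∈ spectrum ℝ A, 0 ≤ p.eval μ) :
    (aeval A p).PosSemidef := by
  rw [← cfc_polynomial p A]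
  exact (cfc_nonneg hp).posSemidef

end Matrix

namespace SimpleGraph

variable {V : Type*} [Fintype V] {G : SimpleGraph V} [DecidableRel G.Adj]

theorem aeval_adjMatrix_apply_eq_zero_of_natDegree_lt_dist [DecidableEq V] {R : Type*}
    [CommSemiring R] {p : R[X]} {u v : V} (h : p.natDegree < G.dist u v) :
    aeval (G.adjMatrix R) p u v = 0 := by
  rw [aeval_eq_sum_range, Matrix.sum_apply]
  refine Finset.sum_eq_zero fun m hm => ?_
  have hm : m < G.dist u v := (Finset.mem_range.mp hm).trans_le (Nat.succ_le_of_lt h)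
  have : IsEmpty {q : G.Walk u v | q.length = m} :=
    ⟨fun ⟨q, hq⟩ => (hm.trans_le (hq ▸ dist_le q)).false⟩
  simp [adjMatrix_pow_apply_eq_card_walk]

namespace IsRegularOfDegree

variable {k : ℕ} {K : Type*} [Field K]

theorem adjMatrix_mulVec_one {R : Type*} [NonAssocSemiring R] (hreg : G.IsRegularOfDegree k) :
    G.adjMatrix R *ᵥ 1 = (k : R) • 1 := by
  ext v
  simp [hreg v]

/-- Evaluate the eigenvalue equation at a vertex where `|v|` is largest. -/
theorem abs_le_of_adjMatrix_mulVec_eq_smul [LinearOrder K] [IsStrictOrderedRing K]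
    (hreg : G.IsRegularOfDegree k) {v : V → K} (hv : v ≠ 0) {μ : K}
    (h : G.adjMatrix K *ᵥ v = μ • v) : |μ| ≤ k := by
  obtain ⟨w, hw⟩ := Function.ne_iff.mp hv
  obtain ⟨u, -, hu⟩ := Finset.exists_max_image univ (fun w => |v w|) ⟨w, mem_univ w⟩
  have hupos : 0 < |v u| := (abs_pos.mpr hw).trans_le (hu w (mem_univ w))
  refine le_of_mul_le_mul_right ?_ hupos
  calc |μ| * |v u| = |∑ w ∈ G.neighborFinset u, v w| := by
        rw [← abs_mul, ← adjMatrix_mulVec_apply, h, Pi.smul_apply, smul_eq_mul]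
    _ ≤ ∑ w ∈ G.neighborFinset u, |v w| := abs_sum_le_sum_abs _ _
    _ ≤ ∑ w ∈ G.neighborFinset u, |v u| := sum_le_sum fun w _ => hu w (mem_univ w)
    _ = k * |v u| := by rw [sum_const, nsmul_eq_mul, card_neighborFinset_eq_degree, hreg u]

variable [DecidableEq V]

theorem abs_le_of_mem_spectrum [LinearOrder K] [IsStrictOrderedRing K]
    (hreg : G.IsRegularOfDegree k) {μ : K} (hμ : μ ∈ spectrum K (G.adjMatrix K)) : |μ| ≤ k := by
  rw [← spectrum_toLin'] at hμ
  obtain ⟨v, hv⟩ := (Module.End.HasEigenvalue.of_mem_spectrum hμ).exists_hasEigenvector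
  refine hreg.abs_le_of_adjMatrix_mulVec_eq_smul hv.2 ?_
  rw [← toLin'_apply]
  exact Module.End.mem_eigenspace_iff.mp hv.1

theorem degree_mem_spectrum [Nonempty V] (hreg : G.IsRegularOfDegree k) :
    (k : K) ∈ spectrum K (G.adjMatrix K) := by
  rw [← spectrum_toLin']
  refine Module.End.HasEigenvalue.mem_spectrum
    (Module.End.hasEigenvalue_of_hasEigenvector ⟨?_, one_ne_zero⟩)
  rw [Module.End.mem_eigenspace_iff, toLin'_apply, hreg.adjMatrix_mulVec_one]

theorem isGreatest_spectrum [LinearOrder K] [IsStrictOrderedRing K] [Nonempty V]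
    (hreg : G.IsRegularOfDegree k) : IsGreatest (spectrum K (G.adjMatrix K)) k :=
  ⟨hreg.degree_mem_spectrum, fun _ hμ => (le_abs_self _).trans (hreg.abs_le_of_mem_spectrum hμ)⟩

end IsRegularOfDegree

end SimpleGraph

open SimpleGraph

section Equidistant

variable {V : Type*} [Fintype V] {G : SimpleGraph V} {t : ℕ} {S : Finset V}

theorem bddAbove_card_isEquidistantSet (G : SimpleGraph V) (t : ℕ) :
    BddAbove {m : ℕ | ∃ S : Finset V, IsEquidistantSet G t S ∧ S.card = m} :=
  ⟨Fintype.card V, by rintro m ⟨S, -, rfl⟩; exact S.card_le_univ⟩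

theorem exists_isEquidistantSet_card_eq_eqNum (G : SimpleGraph V) (t : ℕ) :
    ∃ S : Finset V, IsEquidistantSet G t S ∧ S.card = eqNum G t :=
  Nat.sSup_mem (s := {m : ℕ | ∃ S : Finset V, IsEquidistantSet G t S ∧ S.card = m})
    ⟨0, ∅, by simp [IsEquidistantSet], rfl⟩ (bddAbove_card_isEquidistantSet G t)

theorem IsEquidistantSet.card_le_eqNum (hS : IsEquidistantSet G t S) : S.card ≤ eqNum G t :=
  le_csSup (bddAbove_card_isEquidistantSet G t) ⟨S, hS, rfl⟩

omit [Fintype V] in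
theorem isEquidistantSet_singleton (G : SimpleGraph V) (t : ℕ) (u : V) :
    IsEquidistantSet G t {u} := by
  simp [IsEquidistantSet]

theorem IsEquidistantSet.sum_sum_aeval_adjMatrix [DecidableEq V] [DecidableRel G.Adj]
    {R : Type*} [CommSemiring R] (hS : IsEquidistantSet G t S) {p : R[X]} (hp : p.natDegree < t) :
    ∑ u ∈ S, ∑ v ∈ S, aeval (G.adjMatrix R) p u v = ∑ u ∈ S, aeval (G.adjMatrix R) p u u := by
  refine sum_congr rfl fun u hu => sum_eq_single u (fun v hv hvu => ?_) (absurd hu)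
  exact aeval_adjMatrix_apply_eq_zero_of_natDegree_lt_dist (hS hu hv hvu.symm ▸ hp)

theorem IsEquidistantSet.card_mul_le [DecidableEq V] [DecidableRel G.Adj] {k : ℕ}
    (hreg : G.IsRegularOfDegree k) {p : ℝ[X]} (hp : p.natDegree ≤ t) {W c : ℝ}
    (hW : ∀ u, aeval (G.adjMatrix ℝ) p u u ≤ W)
    (hc : ∀ μ ∈ spectrum ℝ (G.adjMatrix ℝ), c ≤ p.eval μ)
    (hS : IsEquidistantSet G (t + 1) S) (hSne : S.Nonempty) :
    S.card * (p.eval (k : ℝ) - c) ≤ Fintype.card V * (W - c) := by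
  have : Nonempty V := ⟨hSne.choose⟩
  set q := p - C c
  have hM : (aeval (G.adjMatrix ℝ) q).PosSemidef :=
    (G.isHermitian_adjMatrix ℝ).posSemidef_aeval fun μ hμ => by
      simpa [q, sub_nonneg] using hc μ hμ
  have hM1 : aeval (G.adjMatrix ℝ) q *ᵥ 1 = (p.eval (k : ℝ) - c) • 1 := by
    simpa [q] using aeval_mulVec_of_mulVec_eq_smul hreg.adjMatrix_mulVec_one q
  have hdiag : ∑ u ∈ S, aeval (G.adjMatrix ℝ) q u u ≤ S.card * (W - c) := by
    calc ∑ u ∈ S, aeval (G.adjMatrix ℝ) q u u ≤ ∑ _u ∈ S, (W - c) :=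
          sum_le_sum fun u _ => by simpa [q, algebraMap_matrix_apply] using hW u
      _ = S.card * (W - c) := by rw [sum_const, nsmul_eq_mul]
  have hq : q.natDegree < t + 1 := natDegree_sub_C.trans_lt (Nat.lt_succ_of_le hp)
  have hsum : ∑ u, (S : Set V).indicator (1 : V → ℝ) u = S.card := by
    simp [Set.indicator_apply]
  have hquad := hM.sq_sum_mul_le_card_mul hM1 ((S : Set V).indicator 1)
  rw [hsum, indicator_one_dotProduct_mulVec_indicator_one, hS.sum_sum_aeval_adjMatrix hq] at hquad
  have hcard : (0 : ℝ) < S.card := by exact_mod_cast hSne.card_pos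
  refine le_of_mul_le_mul_left ?_ hcard
  calc (S.card : ℝ) * (S.card * (p.eval (k : ℝ) - c))
      = (S.card : ℝ) ^ 2 * (p.eval (k : ℝ) - c) := by ring
    _ ≤ Fintype.card V * ∑ u ∈ S, aeval (G.adjMatrix ℝ) q u u := hquad
    _ ≤ Fintype.card V * (S.card * (W - c)) := by gcongr
    _ = S.card * (Fintype.card V * (W - c)) := by ring

end Equidistant

theorem eqNum_succ_le_ratio_bound_general {V : Type*} [Fintype V] [DecidableEq V]
    (G : SimpleGraph V) [DecidableRel G.Adj]
    (k : ℕ) (hreg : G.IsRegularOfDegree k)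
    (n : ℕ) (hn : Fintype.card V = n) (hn1 : 0 < n)
    (hA : (G.adjMatrix ℝ).IsHermitian)
    (lam : Fin n → ℝ) (hanti : Antitone lam)
    (hlist : ∃ e : Fin n ≃ V, ∀ i, lam i = hA.eigenvalues (e i))
    (t : ℕ) (p : Polynomial ℝ) (hp : p.natDegree ≤ t)
    (W lp : ℝ)
    (hW : IsGreatest (Set.range fun u : V => (Polynomial.aeval (G.adjMatrix ℝ) p) u u) W)
    (hlp : IsLeast {x : ℝ | ∃ i : Fin n, i ≠ ⟨0, hn1⟩ ∧ x = p.eval (lam i)} lp)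
    (hgt : lp < p.eval (lam ⟨0, hn1⟩)) :
    (eqNum G (t + 1) : ℝ) ≤ n * (W - lp) / (p.eval (lam ⟨0, hn1⟩) - lp) := by
  obtain ⟨e, he⟩ := hlist
  have : Nonempty V := Fintype.card_pos_iff.mp (hn ▸ hn1)
  have hrange : Set.range lam = spectrum ℝ (G.adjMatrix ℝ) := by
    rw [hA.spectrum_real_eq_range_eigenvalues, ← EquivLike.range_comp hA.eigenvalues e]
    exact congrArg Set.range (funext he)
  have hlam0 : lam ⟨0, hn1⟩ = k :=
    IsGreatest.unique
      ⟨Set.mem_range_self _, Set.forall_mem_range.2 fun _ => hanti (Nat.zero_le _)⟩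
      (hrange ▸ hreg.isGreatest_spectrum)
  have hc : ∀ μ ∈ spectrum ℝ (G.adjMatrix ℝ), lp ≤ p.eval μ := by
    rw [← hrange]
    rintro _ ⟨i, rfl⟩
    rcases eq_or_ne i ⟨0, hn1⟩ with rfl | hi
    · exact hgt.le
    · exact hlp.2 ⟨i, hi, rfl⟩
  obtain ⟨S, hS, hcard⟩ := exists_isEquidistantSet_card_eq_eqNum G (t + 1)
  have hSne : S.Nonempty := by
    rw [← card_pos, hcard]
    exact (isEquidistantSet_singleton G (t + 1) (Classical.arbitrary V)).card_le_eqNum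
  rw [le_div_iff₀ (sub_pos.2 hgt), ← hcard, hlam0, ← hn]
  exact hS.card_mul_le hreg hp (fun u => hW.2 ⟨u, rfl⟩) hc hSne

/-- Ratio-type bound. Let `G` be a connected regular graph on `n` vertices
with adjacency eigenvalues `λ_1 ≥ ⋯ ≥ λ_n`. For a real polynomial `p` of degree at most `t`,
with `W(p)` the largest diagonal entry of `p(A)` and `λ(p) = min_{2 ≤ i ≤ n} p(λ_i)`, if
`p(λ_1) > λ(p)` then `eq_{t+1}(G) ≤ n (W(p) - λ(p)) / (p(λ_1) - λ(p))`. -/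
theorem eqNum_succ_le_ratio_bound {V : Type*} [Fintype V] [DecidableEq V]
    (G : SimpleGraph V) [DecidableRel G.Adj] (hG : G.Connected)
    (k : ℕ) (hreg : G.IsRegularOfDegree k)
    (n : ℕ) (hn : Fintype.card V = n) (hn1 : 0 < n)
    (hA : (G.adjMatrix ℝ).IsHermitian)
    (lam : Fin n → ℝ) (hanti : Antitone lam)
    (hlist : ∃ e : Fin n ≃ V, ∀ i, lam i = hA.eigenvalues (e i))
    (t : ℕ) (ht : 1 ≤ t) (p : Polynomial ℝ) (hp : p.natDegree ≤ t)
    (W lp : ℝ)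
    (hW : IsGreatest (Set.range fun u : V => (Polynomial.aeval (G.adjMatrix ℝ) p) u u) W)
    (hlp : IsLeast {x : ℝ | ∃ i : Fin n, i ≠ ⟨0, hn1⟩ ∧ x = p.eval (lam i)} lp)
    (hgt : lp < p.eval (lam ⟨0, hn1⟩)) :
    (eqNum G (t + 1) : ℝ) ≤ n * (W - lp) / (p.eval (lam ⟨0, hn1⟩) - lp) :=
  eqNum_succ_le_ratio_bound_general G k hreg n hn hn1 hA lam hanti hlist t p hp W lp hW hlp hgt
end

section
/- Let G be a connected finite simple graph on n ≥ 2 vertices, let D be its distance matrix, and let λ̃_1 ≥ λ̃_2 ≥ ... ≥ λ̃_n be the eigenvalues of D. Then eq(G) ≤ |{i ∈ {1,...,n} : λ̃_i ≤ −1}| + 1. -/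
open SimpleGraph

/-- The distance matrix of `G`, as a real matrix. -/
noncomputable def distMatrix {V : Type*} (G : SimpleGraph V) : Matrix V V ℝ :=
  Matrix.of fun u v => (G.dist u v : ℝ)

/-!
If `S` is a `t`-equidistant set, the distance matrix restricted to `S` is `t (J - I)`, so its
quadratic form equals `-t ‖x‖²` on the `(|S| - 1)`-dimensional space of vectors supported on `S`
with zero sum. Expanding in an orthonormal eigenbasis shows that a subspace on which the quadratic
form is at most `c ‖x‖²` has dimension at most the number of eigenvalues `≤ c` (the easy half of
the min-max principle); for `t ≥ 1` this gives `|S| - 1 ≤ #{i | λ̃ᵢ ≤ -1}`.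
-/

open Matrix Finset

namespace Matrix.IsHermitian

variable {ι : Type*} [Fintype ι] [DecidableEq ι] {A : Matrix ι ι ℝ} (hA : A.IsHermitian)

lemma dotProduct_mulVec_sub_mul_dotProduct_self_eq_sum (c : ℝ) (x : ι → ℝ) :
    x ⬝ᵥ (A *ᵥ x) - c * (x ⬝ᵥ x) =
      ∑ i, (hA.eigenvalues i - c) * (star (hA.eigenvectorUnitary : Matrix ι ι ℝ) *ᵥ x) i ^ 2 := by
  have hA' := hA.spectral_theorem
  have hU := Unitary.coe_mul_star_self hA.eigenvectorUnitary
  simp only [Unitary.conjStarAlgAut_apply, RCLike.ofReal_real_eq_id, Function.id_comp] at hA'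
  rw [Unitary.coe_star] at hU
  generalize (hA.eigenvectorUnitary : Matrix ι ι ℝ) = U at hA' hU ⊢
  generalize hA.eigenvalues = μ at hA' ⊢
  have hstar : star U = Uᵀ := by simp [star_eq_conjTranspose]
  rw [hstar] at hA' hU ⊢
  set y := Uᵀ *ᵥ x with hy
  have hx : U *ᵥ y = x := by rw [hy, mulVec_mulVec, hU, one_mulVec]
  have hquad : x ⬝ᵥ (A *ᵥ x) = y ⬝ᵥ (diagonal μ *ᵥ y) := by
    rw [hA', ← mulVec_mulVec, ← mulVec_mulVec, dotProduct_mulVec, ← mulVec_transpose]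
  have hnorm : x ⬝ᵥ x = y ⬝ᵥ y := by
    conv_rhs => rw [hy, dotProduct_mulVec, vecMul_transpose, hx]
  rw [hquad, hnorm]
  simp only [dotProduct, mulVec_diagonal, Finset.mul_sum, ← Finset.sum_sub_distrib]
  exact Finset.sum_congr rfl fun i _ => by ring

lemma finrank_le_card_eigenvalues_le (c : ℝ) (W : Submodule ℝ (ι → ℝ))
    (hW : ∀ x ∈ W, x ⬝ᵥ (A *ᵥ x) ≤ c * (x ⬝ᵥ x)) :
    Module.finrank ℝ W ≤ Fintype.card {i // hA.eigenvalues i ≤ c} := by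
  set U : Matrix ι ι ℝ := (hA.eigenvectorUnitary : Matrix ι ι ℝ)
  let f : W →ₗ[ℝ] {i // hA.eigenvalues i ≤ c} → ℝ :=
    LinearMap.funLeft ℝ ℝ Subtype.val ∘ₗ (star U).mulVecLin ∘ₗ W.subtype
  suffices hf : Function.Injective f by
    simpa using LinearMap.finrank_le_finrank_of_injective hf
  rw [← LinearMap.ker_eq_bot, LinearMap.ker_eq_bot']
  rintro ⟨x, hxW⟩ hfx
  have hlow : ∀ i, hA.eigenvalues i ≤ c → (star U *ᵥ x) i = 0 := fun i hi =>
    congrFun hfx ⟨i, hi⟩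
  have hterm_nonneg : ∀ i, 0 ≤ (hA.eigenvalues i - c) * (star U *ᵥ x) i ^ 2 := by
    intro i
    rcases le_or_gt (hA.eigenvalues i) c with hi | hi
    · simp [hlow i hi]
    · exact mul_nonneg (sub_nonneg.mpr hi.le) (sq_nonneg _)
  have hsum_nonpos : ∑ i, (hA.eigenvalues i - c) * (star U *ᵥ x) i ^ 2 ≤ 0 := by
    rw [← hA.dotProduct_mulVec_sub_mul_dotProduct_self_eq_sum]
    exact sub_nonpos.mpr (hW x hxW)
  have hterm_zero := (Finset.sum_eq_zero_iff_of_nonneg fun i _ => hterm_nonneg i).mp <|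
    le_antisymm hsum_nonpos (Finset.sum_nonneg fun i _ => hterm_nonneg i)
  have hy : star U *ᵥ x = 0 := by
    funext i
    rcases le_or_gt (hA.eigenvalues i) c with hi | hi
    · exact hlow i hi
    · simpa [(sub_pos.mpr hi).ne'] using hterm_zero i (Finset.mem_univ i)
  have hx : x = U *ᵥ (star U *ᵥ x) := by
    rw [mulVec_mulVec, Unitary.mul_star_self_of_mem hA.eigenvectorUnitary.2, one_mulVec]
  simpa [hy] using hx

end Matrix.IsHermitian

section ZeroSum

variable {V : Type*} [Fintype V] [DecidableEq V]

/-- Presented as a kernel so that rank-nullity bounds its dimension from below. -/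
noncomputable def zeroSumSupportedOn (S : Finset V) : Submodule ℝ (V → ℝ) :=
  LinearMap.ker <| (LinearMap.funLeft ℝ ℝ ((↑) : ↥Sᶜ → V)).prod (∑ v, LinearMap.proj v)

lemma mem_zeroSumSupportedOn {S : Finset V} {x : V → ℝ} :
    x ∈ zeroSumSupportedOn S ↔ (∀ v ∉ S, x v = 0) ∧ ∑ v, x v = 0 := by
  simp [zeroSumSupportedOn, funext_iff, LinearMap.funLeft]

lemma card_le_finrank_zeroSumSupportedOn_add_one (S : Finset V) :
    #S ≤ Module.finrank ℝ (zeroSumSupportedOn S) + 1 := by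
  rw [zeroSumSupportedOn]
  set L := (LinearMap.funLeft ℝ ℝ ((↑) : ↥Sᶜ → V)).prod (∑ v, LinearMap.proj v)
  have hrank := L.finrank_range_add_finrank_ker
  have hrange := (LinearMap.range L).finrank_le
  simp only [Module.finrank_prod, Module.finrank_fintype_fun_eq_card, Fintype.card_coe,
    card_compl, Module.finrank_self] at hrank hrange
  have := S.card_le_univ
  omega

end ZeroSum

namespace IsEquidistantSet

variable {V : Type*} [Fintype V] {G : SimpleGraph V} {t : ℕ} {S : Finset V}

lemma dotProduct_distMatrix_mulVec (hS : IsEquidistantSet G t S) {x : V → ℝ}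
    (hx : ∀ v ∉ S, x v = 0) :
    x ⬝ᵥ (distMatrix G *ᵥ x) = t * ((∑ v, x v) ^ 2 - x ⬝ᵥ x) := by
  classical
  -- valid for all `u v`, since `x` vanishes off `S`
  have hentry : ∀ u v, x u * (G.dist u v * x v) =
      t * (x u * x v) - if u = v then t * (x u * x v) else 0 := by
    intro u v
    by_cases huv : u = v
    · simp [huv]
    by_cases hu : u ∈ S
    · by_cases hv : v ∈ S
      · rw [hS hu hv huv, if_neg huv, sub_zero]; ring
      · simp [hx v hv, huv]
    · simp [hx u hu, huv]
  simp only [dotProduct, mulVec, distMatrix, of_apply, Finset.mul_sum, hentry,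
    Finset.sum_sub_distrib, Finset.sum_ite_eq, Finset.mem_univ, if_true]
  rw [sq, Finset.sum_mul_sum, mul_sub, Finset.mul_sum, Finset.mul_sum]
  simp_rw [Finset.mul_sum]

lemma card_le_card_eigenvalues_le_neg [DecidableEq V] (hS : IsEquidistantSet G t S)
    (hD : (distMatrix G).IsHermitian) :
    #S ≤ Fintype.card {v // hD.eigenvalues v ≤ -t} + 1 := by
  refine (card_le_finrank_zeroSumSupportedOn_add_one S).trans (Nat.add_le_add_right ?_ 1)
  refine hD.finrank_le_card_eigenvalues_le _ _ fun x hx => ?_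
  obtain ⟨hsupp, hsum⟩ := mem_zeroSumSupportedOn.mp hx
  rw [hS.dotProduct_distMatrix_mulVec hsupp, hsum]
  exact le_of_eq (by ring)

end IsEquidistantSet

lemma eqNum_le_of_forall_card_le {V : Type*} [Fintype V] {G : SimpleGraph V} {t m : ℕ}
    (h : ∀ S, IsEquidistantSet G t S → #S ≤ m) : eqNum G t ≤ m :=
  csSup_le ⟨0, ∅, by simp [IsEquidistantSet], rfl⟩ fun _ ⟨S, hS, hcard⟩ => hcard ▸ h S hS

theorem eqTotal_le_distance_spectrum_bound_general {V : Type*} [Fintype V] [DecidableEq V]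
    (G : SimpleGraph V) (n : ℕ) (hD : (distMatrix G).IsHermitian) (lam : Fin n → ℝ)
    (hlist : ∃ e : Fin n ≃ V, ∀ i, lam i = hD.eigenvalues (e i)) :
    eqTotalNum G ≤ {i : Fin n | lam i ≤ -1}.ncard + 1 := by
  obtain ⟨e, he⟩ := hlist
  have hcount : {i : Fin n | lam i ≤ -1}.ncard = Fintype.card {v // hD.eigenvalues v ≤ -1} := by
    rw [← Nat.card_coe_set_eq, ← Nat.card_eq_fintype_card]
    exact Nat.card_congr (e.subtypeEquiv fun i => by simp [he])
  rw [hcount]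
  refine Finset.sup_le fun t ht => eqNum_le_of_forall_card_le fun S hS => ?_
  have ht1 : (1 : ℝ) ≤ t := mod_cast (Finset.mem_Icc.mp ht).1
  calc #S ≤ Fintype.card {v // hD.eigenvalues v ≤ -t} + 1 := hS.card_le_card_eigenvalues_le_neg hD
    _ ≤ Fintype.card {v // hD.eigenvalues v ≤ -1} + 1 := by
      gcongr
      exact Fintype.card_subtype_mono _ _ fun v hv => hv.trans (neg_le_neg ht1)

/-- Let `G` be connected on `n ≥ 2` vertices with distance matrix
eigenvalues `λ̃_1 ≥ ⋯ ≥ λ̃_n`. Then `eq(G) ≤ #{i : λ̃_i ≤ -1} + 1`. -/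
theorem eqTotal_le_distance_spectrum_bound {V : Type*} [Fintype V] [DecidableEq V]
    (G : SimpleGraph V) (hG : G.Connected)
    (n : ℕ) (hn : Fintype.card V = n) (hn2 : 2 ≤ n)
    (hD : (distMatrix G).IsHermitian)
    (lam : Fin n → ℝ) (hanti : Antitone lam)
    (hlist : ∃ e : Fin n ≃ V, ∀ i, lam i = hD.eigenvalues (e i)) :
    eqTotalNum G ≤ {i : Fin n | lam i ≤ -1}.ncard + 1 :=
  eqTotal_le_distance_spectrum_bound_general G n hD lam hlist
end
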